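/- For any Hermiticity-preserving, trace-annihilating linear map Φ on L(ℂ^d) (e.g. Φ = id − T for a channel T) and any density operator ρ on ℂ^d ⊗ ℂ^k, one has ‖(Θ∘Φ ⊗ id)(ρ)‖₁ ≤ d·‖(Φ ⊗ id)(ρ)‖₂ ≤ (d/√2)·‖(Φ ⊗ id)(ρ)‖₁. -/

import Mathlib

open Matrix Kronecker BigOperators
open scoped ComplexOrder

noncomputable def traceNorm {n : Type*} [Fintype n] [DecidableEq n] (X : Matrix n n ℂ) : ℝ :=
  (((Matrix.posSemidef_conjTranspose_mul_self X).1.eigenvectorUnitary.1 *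
      diagonal (((↑) : ℝ → ℂ) ∘ (√·) ∘ (Matrix.posSemidef_conjTranspose_mul_self X).1.eigenvalues) *
      (star (Matrix.posSemidef_conjTranspose_mul_self X).1.eigenvectorUnitary :
        Matrix n n ℂ)).trace).re

noncomputable def hsNorm {n : Type*} [Fintype n] (X : Matrix n n ℂ) : ℝ :=
  Real.sqrt ((Xᴴ * X).trace.re)

noncomputable def singularValues {n : Type*} [Fintype n] [DecidableEq n] (Y : Matrix n n ℂ) :
    n → ℝ :=
  fun i => Real.sqrt ((Matrix.posSemidef_conjTranspose_mul_self Y).1.eigenvalues i)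

/-- Partial transpose on the first tensor factor. -/
def ptransp {d k : ℕ} (X : Matrix (Fin d × Fin k) (Fin d × Fin k) ℂ) :
    Matrix (Fin d × Fin k) (Fin d × Fin k) ℂ :=
  fun p q => X (q.1, p.2) (p.1, q.2)

/-- Partial trace over the first tensor factor. -/
noncomputable def ptraceH {d k : ℕ} (X : Matrix (Fin d × Fin k) (Fin d × Fin k) ℂ) :
    Matrix (Fin k) (Fin k) ℂ :=
  fun j j' => ∑ i, X (i, j) (i, j')

def vec {d : ℕ} (A : Matrix (Fin d) (Fin d) ℂ) : Fin d × Fin d → ℂ := fun p => A p.1 p.2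

/-- Outer product |v⟩⟨w|. -/
def outer {n : Type*} (v w : n → ℂ) : Matrix n n ℂ := fun i j => v i * star (w j)

/-- The swap operator F(e_i ⊗ e_j) = e_j ⊗ e_i. -/
def swapOp (d : ℕ) : Matrix (Fin d × Fin d) (Fin d × Fin d) ℂ :=
  fun p q => if p.1 = q.2 ∧ p.2 = q.1 then 1 else 0

/-- Blockwise action of Φ ⊗ id on operators on H ⊗ K. -/
def tensorExt {d k : ℕ} (Φ : Matrix (Fin d) (Fin d) ℂ → Matrix (Fin d) (Fin d) ℂ)
    (Z : Matrix (Fin d × Fin k) (Fin d × Fin k) ℂ) :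
    Matrix (Fin d × Fin k) (Fin d × Fin k) ℂ :=
  fun p q => Φ (fun a b => Z (a, p.2) (b, q.2)) p.1 q.1

/-- Diamond norm (stabilized at ancilla dimension d). -/
noncomputable def diamondNorm {d : ℕ}
    (Φ : Matrix (Fin d) (Fin d) ℂ → Matrix (Fin d) (Fin d) ℂ) : ℝ :=
  ⨆ ρ : {ρ : Matrix (Fin d × Fin d) (Fin d × Fin d) ℂ // ρ.PosSemidef ∧ ρ.trace = 1},
    traceNorm (tensorExt Φ ρ.1)

/-!
`Y = (Φ ⊗ id)(ρ)` is Hermitian and traceless. Partial transposition only permutes the entries of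
`Y`, so it preserves the Hilbert–Schmidt norm, and Cauchy–Schwarz over the `dk ≤ d²` singular values
gives `‖·‖₁ ≤ √(dk) ‖·‖₂`. For the second inequality, the eigenvalues `λᵢ` of `Y` sum to zero, so
`|λᵢ| = |∑_{j ≠ i} λⱼ|` is at most half of `∑ⱼ |λⱼ|`, whence `∑ λᵢ² ≤ (∑ⱼ |λⱼ|)² / 2`.
-/

lemma two_mul_sum_sq_le_sq_sum_abs {ι : Type*} [DecidableEq ι] (s : Finset ι) (f : ι → ℝ)
    (h0 : ∑ i ∈ s, f i = 0) : 2 * ∑ i ∈ s, f i ^ 2 ≤ (∑ i ∈ s, |f i|) ^ 2 := by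
  set S := ∑ i ∈ s, |f i|
  have two_mul_abs_le : ∀ i ∈ s, 2 * |f i| ≤ S := by
    intro i hi
    have hf : f i = -∑ j ∈ s.erase i, f j := by
      rw [← Finset.add_sum_erase s f hi] at h0
      linarith
    have abs_le_rest : |f i| ≤ ∑ j ∈ s.erase i, |f j| := by
      rw [hf, abs_neg]
      exact Finset.abs_sum_le_sum_abs _ _
    linarith [Finset.add_sum_erase s (fun j => |f j|) hi]
  calc 2 * ∑ i ∈ s, f i ^ 2 = ∑ i ∈ s, 2 * |f i| * |f i| := by
        rw [Finset.mul_sum]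
        exact Finset.sum_congr rfl fun i _ => by rw [mul_assoc, ← sq, sq_abs]
    _ ≤ ∑ i ∈ s, S * |f i| :=
        Finset.sum_le_sum fun i hi =>
          mul_le_mul_of_nonneg_right (two_mul_abs_le i hi) (abs_nonneg _)
    _ = S ^ 2 := by rw [← Finset.mul_sum, sq]

namespace Matrix

variable {n : Type*} [Fintype n] [DecidableEq n]

lemma IsHermitian.trace_cfc {A : Matrix n n ℂ} (hA : A.IsHermitian) (f : ℝ → ℝ) :
    (cfc f A).trace = ∑ i, (f (hA.eigenvalues i) : ℂ) := by
  rw [hA.cfc_eq, IsHermitian.cfc, Unitary.conjStarAlgAut_apply, trace_mul_cycle,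
    UnitaryGroup.star_mul_self, one_mul, trace_diagonal]
  rfl

lemma traceNorm_eq_re_trace_cfc_sqrt (X : Matrix n n ℂ) :
    traceNorm X = (cfc Real.sqrt (Xᴴ * X)).trace.re := by
  rw [(posSemidef_conjTranspose_mul_self X).1.cfc_eq, IsHermitian.cfc,
    Unitary.conjStarAlgAut_apply]
  rfl

lemma traceNorm_eq_sum_singularValues (X : Matrix n n ℂ) :
    traceNorm X = ∑ i, singularValues X i := by
  rw [traceNorm_eq_re_trace_cfc_sqrt, (posSemidef_conjTranspose_mul_self X).1.trace_cfc,
    Complex.re_sum]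
  rfl

lemma hsNorm_eq_sqrt_sum_sq_singularValues (X : Matrix n n ℂ) :
    hsNorm X = √(∑ i, singularValues X i ^ 2) := by
  rw [hsNorm, (posSemidef_conjTranspose_mul_self X).1.trace_eq_sum_eigenvalues, Complex.re_sum]
  congr 1
  refine Finset.sum_congr rfl fun i _ => ?_
  rw [singularValues, Real.sq_sqrt ((posSemidef_conjTranspose_mul_self X).eigenvalues_nonneg i)]
  rfl

lemma traceNorm_le_sqrt_card_mul_hsNorm (X : Matrix n n ℂ) :
    traceNorm X ≤ √(Fintype.card n) * hsNorm X := by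
  rw [traceNorm_eq_sum_singularValues, hsNorm_eq_sqrt_sum_sq_singularValues,
    ← Real.sqrt_mul (Nat.cast_nonneg _)]
  refine Real.le_sqrt_of_sq_le ?_
  simpa using sq_sum_le_card_mul_sum_sq (s := Finset.univ) (f := singularValues X)

omit [DecidableEq n] in
lemma re_trace_conjTranspose_mul_self_eq_sum_normSq (X : Matrix n n ℂ) :
    (Xᴴ * X).trace.re = ∑ p, ∑ q, Complex.normSq (X p q) := by
  simp only [trace, diag_apply, mul_apply, conjTranspose_apply, Complex.re_sum]
  rw [Finset.sum_comm]
  simp [Complex.normSq_apply]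

lemma IsHermitian.conjTranspose_mul_self_eq_cfc {Y : Matrix n n ℂ} (hY : Y.IsHermitian) :
    Yᴴ * Y = cfc (· ^ 2 : ℝ → ℝ) Y := by
  rw [hY.eq, cfc_pow_id Y 2 hY.isSelfAdjoint, sq]

lemma IsHermitian.re_trace_conjTranspose_mul_self {Y : Matrix n n ℂ} (hY : Y.IsHermitian) :
    (Yᴴ * Y).trace.re = ∑ i, hY.eigenvalues i ^ 2 := by
  rw [hY.conjTranspose_mul_self_eq_cfc, hY.trace_cfc, Complex.re_sum]
  rfl

lemma IsHermitian.traceNorm_eq_sum_abs_eigenvalues {Y : Matrix n n ℂ} (hY : Y.IsHermitian) :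
    traceNorm Y = ∑ i, |hY.eigenvalues i| := by
  rw [traceNorm_eq_re_trace_cfc_sqrt, hY.conjTranspose_mul_self_eq_cfc,
    ← cfc_comp' Real.sqrt (· ^ 2) Y (ha := hY.isSelfAdjoint), hY.trace_cfc, Complex.re_sum]
  simp [Real.sqrt_sq_eq_abs]

lemma IsHermitian.sqrt_two_mul_hsNorm_le_traceNorm {Y : Matrix n n ℂ} (hY : Y.IsHermitian)
    (htr : Y.trace = 0) : √2 * hsNorm Y ≤ traceNorm Y := by
  have h0 : ∑ i, hY.eigenvalues i = 0 := by
    have := congrArg Complex.re hY.trace_eq_sum_eigenvalues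
    simpa [htr] using this.symm
  rw [hsNorm, hY.re_trace_conjTranspose_mul_self, hY.traceNorm_eq_sum_abs_eigenvalues,
    ← Real.sqrt_mul zero_le_two]
  exact Real.sqrt_le_iff.mpr ⟨Finset.sum_nonneg fun i _ => abs_nonneg _,
    two_mul_sum_sq_le_sq_sum_abs _ _ h0⟩

end Matrix

section TensorExt

variable {d k : ℕ}

lemma hsNorm_ptransp (X : Matrix (Fin d × Fin k) (Fin d × Fin k) ℂ) :
    hsNorm (ptransp X) = hsNorm X := by
  simp only [hsNorm, re_trace_conjTranspose_mul_self_eq_sum_normSq, ← Fintype.sum_prod_type']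
  congr 1
  exact Equiv.sum_comp (Function.Involutive.toPerm (fun x => ((x.2.1, x.1.2), (x.1.1, x.2.2)))
    fun _ => rfl) (fun x => Complex.normSq (X x.1 x.2))

lemma conjTranspose_tensorExt {Φ : Matrix (Fin d) (Fin d) ℂ → Matrix (Fin d) (Fin d) ℂ}
    (hΦ : ∀ Z, Φ Zᴴ = (Φ Z)ᴴ) (Z : Matrix (Fin d × Fin k) (Fin d × Fin k) ℂ) :
    (tensorExt Φ Z)ᴴ = tensorExt Φ Zᴴ := by
  ext p q
  exact (congrFun₂ (hΦ fun a b => Z (a, q.2) (b, p.2)) p.1 q.1).symm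

lemma trace_tensorExt (Φ : Matrix (Fin d) (Fin d) ℂ → Matrix (Fin d) (Fin d) ℂ)
    (Z : Matrix (Fin d × Fin k) (Fin d × Fin k) ℂ) :
    (tensorExt Φ Z).trace = ∑ j, (Φ fun a b => Z (a, j) (b, j)).trace := by
  rw [trace, Fintype.sum_prod_type, Finset.sum_comm]
  rfl

end TensorExt

theorem ptransp_chain_bound_general {d k : ℕ} (hk : k ≤ d)
    (Φ : Matrix (Fin d) (Fin d) ℂ →ₗ[ℂ] Matrix (Fin d) (Fin d) ℂ)
    (hherm : ∀ Z, Φ Zᴴ = (Φ Z)ᴴ) (htr : ∀ Z, (Φ Z).trace = 0)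
    (ρ : Matrix (Fin d × Fin k) (Fin d × Fin k) ℂ)
    (hρ : ρ.PosSemidef) :
    traceNorm (ptransp (tensorExt (fun X => Φ X) ρ)) ≤
      d * hsNorm (tensorExt (fun X => Φ X) ρ) ∧
    d * hsNorm (tensorExt (fun X => Φ X) ρ) ≤
      (d / Real.sqrt 2) * traceNorm (tensorExt (fun X => Φ X) ρ) := by
  set Y := tensorExt (fun X => Φ X) ρ
  have hY : Y.IsHermitian := by
    rw [IsHermitian, conjTranspose_tensorExt hherm, hρ.1.eq]
  have hYtr : Y.trace = 0 := (trace_tensorExt _ ρ).trans (Finset.sum_eq_zero fun j _ => htr _)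
  have hdk : √(d * k : ℝ) ≤ d :=
    Real.sqrt_le_iff.mpr ⟨d.cast_nonneg, by rw [sq]; gcongr⟩
  constructor
  · calc traceNorm (ptransp Y) ≤ √(d * k : ℝ) * hsNorm (ptransp Y) := by
          simpa using traceNorm_le_sqrt_card_mul_hsNorm (ptransp Y)
      _ ≤ d * hsNorm Y := by
          rw [hsNorm_ptransp]
          exact mul_le_mul_of_nonneg_right hdk (Real.sqrt_nonneg _)
  · calc (d : ℝ) * hsNorm Y = (d / √2) * (√2 * hsNorm Y) := by field_simp
      _ ≤ (d / √2) * traceNorm Y := by gcongr; exact hY.sqrt_two_mul_hsNorm_le_traceNorm hYtr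

theorem ptransp_chain_bound {d k : ℕ} (hk : k ≤ d)
    (Φ : Matrix (Fin d) (Fin d) ℂ →ₗ[ℂ] Matrix (Fin d) (Fin d) ℂ)
    (hherm : ∀ Z, Φ Zᴴ = (Φ Z)ᴴ) (htr : ∀ Z, (Φ Z).trace = 0)
    (ρ : Matrix (Fin d × Fin k) (Fin d × Fin k) ℂ)
    (hρ : ρ.PosSemidef) (hρ1 : ρ.trace = 1) :
    traceNorm (ptransp (tensorExt (fun X => Φ X) ρ)) ≤
      d * hsNorm (tensorExt (fun X => Φ X) ρ) ∧
    d * hsNorm (tensorExt (fun X => Φ X) ρ) ≤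
      (d / Real.sqrt 2) * traceNorm (tensorExt (fun X => Φ X) ρ) :=
  ptransp_chain_bound_general hk Φ hherm htr ρ hρ
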